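/- Let G be a strongly topologically orderable gyrogroup which is not totally disconnected. Then G contains an open first-countable L-subgyrogroup, and consequently G is metrizable. -/

import Mathlib

open Set Topology Uniformity

universe u

class Gyrogroup (G : Type u) where
  op : G → G → G
  one : G
  inv : G → G
  gyr : G → G → G ≃ G
  one_op : ∀ g, op one g = g
  op_one : ∀ g, op g one = g
  inv_op : ∀ g, op (inv g) g = one
  op_inv : ∀ g, op g (inv g) = one
  unique_one : ∀ e : G, (∀ g, op e g = g ∧ op g e = g) → e = one
  unique_inv : ∀ g h : G, (op h g = one ∧ op g h = one) → h = inv g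
  gyr_op : ∀ g h f, op g (op h f) = op (op g h) (gyr g h f)
  gyr_hom : ∀ g h a b, gyr g h (op a b) = op (gyr g h a) (gyr g h b)
  loop : ∀ g h, gyr g h = gyr (op g h) h

namespace Gyrogroup

variable {G : Type u} [Gyrogroup G]

/-- `H` is a subgyrogroup: nonempty and a gyrogroup under the restricted operations. -/
def IsSubgyrogroup (H : Set G) : Prop :=
  H.Nonempty ∧ one ∈ H ∧
  (∀ a ∈ H, ∀ b ∈ H, op a b ∈ H) ∧
  (∀ a ∈ H, inv a ∈ H) ∧
  (∀ a ∈ H, ∀ b ∈ H, Set.BijOn (gyr a b) H H)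

/-- `H` is an L-subgyrogroup: `gyr g h` fixes `H` setwise for every `g ∈ G`, `h ∈ H`. -/
def IsLSubgyrogroup (H : Set G) : Prop :=
  IsSubgyrogroup H ∧ ∀ g : G, ∀ h ∈ H, (gyr g h) '' H = H

def leftCoset (a : G) (H : Set G) : Set G := (fun h => op a h) '' H

/-- The subgyrogroup generated by `S`. -/
def generatedSubgyrogroup (S : Set G) : Set G :=
  ⋂₀ {H : Set G | IsSubgyrogroup H ∧ S ⊆ H}

/-- The gyrogroup operations are continuous (topological gyrogroup). -/
def ContinuousGyroOps (G : Type u) [Gyrogroup G] [TopologicalSpace G] : Prop :=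
  Continuous (fun p : G × G => op p.1 p.2) ∧ Continuous (inv : G → G)

/-- The topology coincides with the order topology of some linear order. -/
def TopologicallyOrderable (G : Type u) [t : TopologicalSpace G] : Prop :=
  ∃ l : LinearOrder G, t = TopologicalSpace.generateFrom
      {s : Set G | ∃ a : G, s = {x | l.lt a x} ∨ s = {x | l.lt x a}}

/-- A strongly topological gyrogroup: a topological gyrogroup with a neighborhood base
at `1` whose members are invariant under all gyroautomorphisms. -/
def StronglyTopologicalGyrogroup (G : Type u) [Gyrogroup G] [TopologicalSpace G] : Prop :=
  ContinuousGyroOps G ∧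
  ∃ 𝒰 : Set (Set G), (∀ U ∈ 𝒰, U ∈ nhds (one : G)) ∧
    (∀ V ∈ nhds (one : G), ∃ U ∈ 𝒰, U ⊆ V) ∧
    (∀ U ∈ 𝒰, ∀ x y : G, (gyr x y) '' U = U)

def StronglyTopologicallyOrderable (G : Type u) [Gyrogroup G] [TopologicalSpace G] : Prop :=
  StronglyTopologicalGyrogroup G ∧ TopologicallyOrderable G

end Gyrogroup

open Gyrogroup

namespace Gyrogroup

variable {G : Type u} [Gyrogroup G]

lemma op_left_cancel (a : G) {x y : G} (h : op a x = op a y) : x = y := by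
  have h2 : op (inv a) (op a x) = op (inv a) (op a y) := by rw [h]
  rw [gyr_op, gyr_op, inv_op, one_op, one_op] at h2
  exact (gyr (inv a) a).injective h2

lemma gyr_one_left (a : G) (f : G) : gyr (one : G) a f = f := by
  have := gyr_op (one : G) a f
  rw [one_op, one_op] at this
  exact (op_left_cancel a this.symm)

lemma gyr_one_right (g : G) (f : G) : gyr g (one : G) f = f := by
  have := gyr_op g (one : G) f
  rw [one_op, op_one] at this
  exact (op_left_cancel g this.symm)

lemma gyr_inv_left (a : G) (f : G) : gyr (inv a) a f = f := by
  rw [loop (inv a) a, inv_op, gyr_one_left]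

lemma gyr_inv_right (a : G) (f : G) : gyr a (inv a) f = f := by
  rw [loop a (inv a), op_inv, gyr_one_left]

lemma inv_op_cancel (a b : G) : op (inv a) (op a b) = b := by
  rw [gyr_op, inv_op, one_op, gyr_inv_left]

lemma op_inv_cancel (a b : G) : op a (op (inv a) b) = b := by
  rw [gyr_op, op_inv, one_op, gyr_inv_right]

lemma eq_inv_of_op_eq_one {a x : G} (h : op a x = one) : x = inv a :=
  op_left_cancel a (h.trans (op_inv a).symm)

lemma inv_one : inv (one : G) = one := (eq_inv_of_op_eq_one (one_op one)).symm

lemma inv_inv (a : G) : inv (inv a) = a := (eq_inv_of_op_eq_one (inv_op a)).symm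

lemma gyr_fix_one (g h : G) : gyr g h (one : G) = one := by
  have h1 : gyr g h (one : G) = op (gyr g h one) (gyr g h one) := by
    rw [← gyr_hom, one_op]
  have h2 : op (gyr g h (one : G)) (one : G) = op (gyr g h one) (gyr g h one) := by
    rw [op_one]; exact h1
  exact (op_left_cancel _ h2).symm

lemma gyr_inv_comm (g h a : G) : gyr g h (inv a) = inv (gyr g h a) := by
  apply eq_inv_of_op_eq_one
  rw [← gyr_hom, op_inv, gyr_fix_one]

lemma gyr_apply_eq (g h f : G) : gyr g h f = op (inv (op g h)) (op g (op h f)) := by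
  rw [gyr_op g h f, inv_op_cancel]

lemma gyr_symm_apply (g h y : G) :
    (gyr g h).symm y = op (inv h) (op (inv g) (op (op g h) y)) := by
  apply (gyr g h).injective
  rw [Equiv.apply_symm_apply]
  have h2 : op (op g h) (gyr g h (op (inv h) (op (inv g) (op (op g h) y)))) =
      op (op g h) y := by
    rw [← gyr_op, op_inv_cancel, op_inv_cancel]
  exact (op_left_cancel _ h2).symm

lemma inv_op_rev (a b : G) : inv (op a b) = gyr a b (op (inv b) (inv a)) := by
  symm; apply eq_inv_of_op_eq_one
  rw [← gyr_op, op_inv_cancel, op_inv]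

lemma comp_identity (x y z : G) :
    op (inv x) z = op (op (inv x) y) (gyr (inv x) y (op (inv y) z)) := by
  rw [← gyr_op, op_inv_cancel]

lemma symm_identity (x y : G) :
    op (inv y) x = (gyr (inv x) y).symm (inv (op (inv x) y)) := by
  rw [inv_op_rev (inv x) y, inv_inv, Equiv.symm_apply_apply]

end Gyrogroup

namespace Gyrogroup

variable {G : Type u} [Gyrogroup G] [TopologicalSpace G]

/-- Left translation as a homeomorphism. -/
def homeoL (hc : ContinuousGyroOps G) (a : G) : G ≃ₜ G where
  toFun := fun x => op a x
  invFun := fun x => op (inv a) x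
  left_inv := fun x => inv_op_cancel a x
  right_inv := fun x => op_inv_cancel a x
  continuous_toFun := hc.1.comp (Continuous.prodMk_right a)
  continuous_invFun := hc.1.comp (Continuous.prodMk_right (inv a))

lemma continuous_op_left (hc : ContinuousGyroOps G) (a : G) :
    Continuous (fun x => op a x) := hc.1.comp (Continuous.prodMk_right a)

lemma continuous_op_right (hc : ContinuousGyroOps G) (a : G) :
    Continuous (fun x => op x a) := hc.1.comp (Continuous.prodMk_left a)

/-- Gyration as a homeomorphism. -/
def homeoGyr (hc : ContinuousGyroOps G) (g h : G) : G ≃ₜ G where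
  toEquiv := gyr g h
  continuous_toFun := by
    have : (fun f => gyr g h f) = fun f => op (inv (op g h)) (op g (op h f)) := by
      funext f; exact gyr_apply_eq g h f
    show Continuous (fun f => gyr g h f)
    rw [this]
    exact (continuous_op_left hc _).comp ((continuous_op_left hc g).comp
      (continuous_op_left hc h))
  continuous_invFun := by
    have : (fun y => (gyr g h).symm y)
        = fun y => op (inv h) (op (inv g) (op (op g h) y)) := by
      funext y; exact gyr_symm_apply g h y
    show Continuous (fun y => (gyr g h).symm y)
    rw [this]
    exact (continuous_op_left hc _).comp ((continuous_op_left hc _).comp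
      (continuous_op_left hc _))

/-- The connected component of the identity. -/
def comp1 (G : Type u) [Gyrogroup G] [TopologicalSpace G] : Set G :=
  connectedComponent (one : G)

lemma one_mem_comp1 : (one : G) ∈ comp1 G := mem_connectedComponent

lemma image_comp1_of_homeo (e : G ≃ₜ G) (he : e one = one) :
    e '' comp1 G = comp1 G := by
  apply subset_antisymm
  · have := e.continuous.image_connectedComponent_subset (one : G)
    rwa [he] at this
  · intro x hx
    have h2 := e.symm.continuous.image_connectedComponent_subset (one : G)
    have he' : e.symm one = one := by
      apply e.toEquiv.injective
      show e (e.symm one) = e one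
      rw [Homeomorph.apply_symm_apply, he]
    rw [he'] at h2
    exact ⟨e.symm x, h2 ⟨x, hx, rfl⟩, e.apply_symm_apply x⟩

lemma op_mem_comp1 (hc : ContinuousGyroOps G) {a b : G} (ha : a ∈ comp1 G)
    (hb : b ∈ comp1 G) : op a b ∈ comp1 G := by
  have h1 : (homeoL hc a) '' comp1 G ⊆ connectedComponent a := by
    have := (homeoL hc a).continuous.image_connectedComponent_subset (one : G)
    simpa [homeoL, op_one, comp1] using this
  have h2 : connectedComponent a = comp1 G := (connectedComponent_eq ha).symm
  exact h2 ▸ h1 ⟨b, hb, rfl⟩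

lemma inv_mem_comp1 (hc : ContinuousGyroOps G) {a : G} (ha : a ∈ comp1 G) :
    inv a ∈ comp1 G := by
  have h1 : (inv : G → G) '' comp1 G ⊆ connectedComponent (inv one) :=
    hc.2.image_connectedComponent_subset (one : G)
  rw [inv_one] at h1
  exact h1 ⟨a, ha, rfl⟩

lemma gyr_image_comp1 (hc : ContinuousGyroOps G) (g h : G) :
    (gyr g h) '' comp1 G = comp1 G :=
  image_comp1_of_homeo (homeoGyr hc g h) (gyr_fix_one g h)

end Gyrogroup

namespace Gyrogroup

variable {G : Type u} [Gyrogroup G] [TopologicalSpace G] [LinearOrder G] [OrderTopology G]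

/-- Left translations by elements of the identity component are strictly monotone. -/
lemma translation_lt (hc : ContinuousGyroOps G) {x y : G} (hxy : x < y) :
    ∀ a ∈ comp1 G, op a x < op a y := by
  set U : Set G := {a | op a x < op a y} with hU
  set V : Set G := {a | op a y < op a x} with hV
  have hUopen : IsOpen U := isOpen_lt (continuous_op_right hc x) (continuous_op_right hc y)
  have hVopen : IsOpen V := isOpen_lt (continuous_op_right hc y) (continuous_op_right hc x)
  have hcover : comp1 G ⊆ U ∪ V := by
    intro a _
    rcases lt_trichotomy (op a x) (op a y) with h | h | h
    · exact Or.inl h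
    · exact absurd (op_left_cancel a h) (ne_of_lt hxy)
    · exact Or.inr h
  have h1U : (one : G) ∈ U := by simpa [hU, one_op] using hxy
  intro a ha
  by_contra hne
  have haV : a ∈ V := by
    rcases hcover ha with h | h
    · exact absurd h hne
    · exact h
  obtain ⟨w, _, hwU, hwV⟩ := isPreconnected_connectedComponent U V hUopen hVopen hcover
    ⟨one, one_mem_comp1, h1U⟩ ⟨a, ha, haV⟩
  exact absurd (lt_trans hwU hwV) (lt_irrefl _)

end Gyrogroup

namespace Gyrogroup

variable {G : Type u} [Gyrogroup G] [TopologicalSpace G] [LinearOrder G] [OrderTopology G]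

/-- The identity component is order convex. -/
lemma comp1_convex {x y w : G} (hx : x ∈ comp1 G) (hy : y ∈ comp1 G)
    (h1 : x ≤ w) (h2 : w ≤ y) : w ∈ comp1 G := by
  by_contra hw
  have hxw : x < w := lt_of_le_of_ne h1 (fun h => hw (h ▸ hx))
  have hwy : w < y := lt_of_le_of_ne h2 (fun h => hw (h ▸ hy))
  obtain ⟨z, _, hz1, hz2⟩ := isPreconnected_connectedComponent (Iio w) (Ioi w)
    isOpen_Iio isOpen_Ioi
    (fun c hcmem => by
      rcases lt_trichotomy c w with h | h | h
      · exact Or.inl h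
      · exact absurd (h ▸ hcmem) hw
      · exact Or.inr h)
    ⟨x, hx, hxw⟩ ⟨y, hy, hwy⟩
  exact absurd (lt_trans hz1 hz2) (lt_irrefl _)

/-- Density inside the identity component. -/
lemma comp1_dense {x y : G} (hx : x ∈ comp1 G) (hy : y ∈ comp1 G) (hxy : x < y) :
    ∃ z, x < z ∧ z < y := by
  by_contra hno
  push_neg at hno
  obtain ⟨z, _, hz1, hz2⟩ := isPreconnected_connectedComponent (Iio y) (Ioi x)
    isOpen_Iio isOpen_Ioi
    (fun c _ => by
      rcases lt_or_ge c y with h | h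
      · exact Or.inl h
      · exact Or.inr (lt_of_lt_of_le hxy h))
    ⟨x, hx, hxy⟩ ⟨y, hy, hxy⟩
  exact absurd hz1 (not_lt.2 (hno z hz2))

/-- Bounded sequences in the identity component have infima. -/
lemma comp1_exists_glb {z : ℕ → G} (hz : ∀ n, z n ∈ comp1 G) {a : G}
    (ha : a ∈ comp1 G) (hlb : ∀ n, a ≤ z n) (hdec : z 1 < z 0) :
    ∃ q, IsGLB (Set.range z) q := by
  by_contra hno
  push_neg at hno
  set U : Set G := ⋃ n, Ioi (z n) with hUdef
  set V : Set G := ⋃ u ∈ lowerBounds (Set.range z), Iio u with hVdef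
  have hUopen : IsOpen U := isOpen_iUnion (fun n => isOpen_Ioi)
  have hVopen : IsOpen V := isOpen_biUnion (fun u _ => isOpen_Iio)
  have hcover : comp1 G ⊆ U ∪ V := by
    intro c _
    by_cases hcU : ∃ n, z n < c
    · exact Or.inl (Set.mem_iUnion.2 ⟨hcU.choose, hcU.choose_spec⟩)
    · push_neg at hcU
      have hclb : c ∈ lowerBounds (Set.range z) := by
        rintro _ ⟨n, rfl⟩; exact hcU n
      have : ¬ IsGLB (Set.range z) c := hno c
      rw [IsGLB] at this
      have : ∃ u ∈ lowerBounds (Set.range z), ¬ u ≤ c := by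
        by_contra hall
        push_neg at hall
        exact this ⟨hclb, fun u hu => hall u hu⟩
      obtain ⟨u, hu1, hu2⟩ := this
      exact Or.inr (Set.mem_biUnion hu1 (lt_of_not_ge hu2))
  have hdisj : ∀ w, w ∈ U → w ∈ V → False := by
    intro w hwU hwV
    obtain ⟨n, hn⟩ := Set.mem_iUnion.1 hwU
    simp only [hVdef, Set.mem_iUnion, Set.mem_Iio] at hwV
    obtain ⟨u, hu, hwu⟩ := hwV
    exact absurd (lt_of_lt_of_le (lt_trans hn hwu) (hu ⟨n, rfl⟩)) (lt_irrefl _)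
  have haV : a ∈ V := by
    have halb : a ∈ lowerBounds (Set.range z) := by rintro _ ⟨n, rfl⟩; exact hlb n
    have : ∃ u ∈ lowerBounds (Set.range z), ¬ u ≤ a := by
      by_contra hall
      push_neg at hall
      exact hno a ⟨halb, fun u hu => hall u hu⟩
    obtain ⟨u, hu1, hu2⟩ := this
    exact Set.mem_biUnion hu1 (lt_of_not_ge hu2)
  obtain ⟨w, _, hwU, hwV⟩ := isPreconnected_connectedComponent U V hUopen hVopen hcover
    ⟨z 0, hz 0, Set.mem_iUnion.2 ⟨1, hdec⟩⟩ ⟨a, ha, haV⟩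
  exact hdisj w hwU hwV

/-- Bounded sequences in the identity component have suprema. -/
lemma comp1_exists_lub {z : ℕ → G} (hz : ∀ n, z n ∈ comp1 G) {a : G}
    (ha : a ∈ comp1 G) (hub : ∀ n, z n ≤ a) (hinc : z 0 < z 1) :
    ∃ q, IsLUB (Set.range z) q := by
  by_contra hno
  push_neg at hno
  set U : Set G := ⋃ n, Iio (z n) with hUdef
  set V : Set G := ⋃ u ∈ upperBounds (Set.range z), Ioi u with hVdef
  have hUopen : IsOpen U := isOpen_iUnion (fun n => isOpen_Iio)
  have hVopen : IsOpen V := isOpen_biUnion (fun u _ => isOpen_Ioi)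
  have hcover : comp1 G ⊆ U ∪ V := by
    intro c _
    by_cases hcU : ∃ n, c < z n
    · exact Or.inl (Set.mem_iUnion.2 ⟨hcU.choose, hcU.choose_spec⟩)
    · push_neg at hcU
      have hcub : c ∈ upperBounds (Set.range z) := by
        rintro _ ⟨n, rfl⟩; exact hcU n
      have : ∃ u ∈ upperBounds (Set.range z), ¬ c ≤ u := by
        by_contra hall
        push_neg at hall
        exact hno c ⟨hcub, fun u hu => hall u hu⟩
      obtain ⟨u, hu1, hu2⟩ := this
      exact Or.inr (Set.mem_biUnion hu1 (lt_of_not_ge hu2))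
  have hdisj : ∀ w, w ∈ U → w ∈ V → False := by
    intro w hwU hwV
    obtain ⟨n, hn⟩ := Set.mem_iUnion.1 hwU
    simp only [hVdef, Set.mem_iUnion, Set.mem_Ioi] at hwV
    obtain ⟨u, hu, hwu⟩ := hwV
    exact absurd (lt_of_le_of_lt (hu ⟨n, rfl⟩) (lt_trans hwu hn)) (lt_irrefl _)
  have haV : a ∈ V := by
    have haub : a ∈ upperBounds (Set.range z) := by rintro _ ⟨n, rfl⟩; exact hub n
    have : ∃ u ∈ upperBounds (Set.range z), ¬ a ≤ u := by
      by_contra hall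
      push_neg at hall
      exact hno a ⟨haub, fun u hu => hall u hu⟩
    obtain ⟨u, hu1, hu2⟩ := this
    exact Set.mem_biUnion hu1 (lt_of_not_ge hu2)
  obtain ⟨w, _, hwU, hwV⟩ := isPreconnected_connectedComponent U V hUopen hVopen hcover
    ⟨z 0, hz 0, Set.mem_iUnion.2 ⟨1, hinc⟩⟩ ⟨a, ha, haV⟩
  exact hdisj w hwU hwV

end Gyrogroup

namespace Gyrogroup

variable {G : Type u} [Gyrogroup G] [TopologicalSpace G] [LinearOrder G] [OrderTopology G]

lemma homeoL_image_comp1 (hc : ContinuousGyroOps G) {a : G} (ha : a ∈ comp1 G) :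
    (fun x => op a x) '' comp1 G = comp1 G := by
  apply subset_antisymm
  · rintro _ ⟨x, hx, rfl⟩
    exact op_mem_comp1 hc ha hx
  · intro x hx
    exact ⟨op (inv a) x, op_mem_comp1 hc (inv_mem_comp1 hc ha) hx, op_inv_cancel a x⟩

lemma comp1_open (hc : ContinuousGyroOps G)
    (hnd : ∃ a b : G, a ∈ comp1 G ∧ b ∈ comp1 G ∧ a < b) : IsOpen (comp1 G) := by
  obtain ⟨a, b, ha, hb, hab⟩ := hnd
  obtain ⟨c, hc1, hc2⟩ := comp1_dense ha hb hab
  have hcC : c ∈ comp1 G := comp1_convex ha hb (le_of_lt hc1) (le_of_lt hc2)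
  rw [isOpen_iff_mem_nhds]
  intro y hy
  set e : G ≃ₜ G := (homeoL hc (inv c)).trans (homeoL hc y) with he
  have himg : e '' comp1 G = comp1 G := by
    have h1 : (e : G → G) = (fun x => op y x) ∘ (fun x => op (inv c) x) := rfl
    rw [h1, Set.image_comp, homeoL_image_comp1 hc (inv_mem_comp1 hc hcC),
      homeoL_image_comp1 hc hy]
  have hec : e c = y := by
    show op y (op (inv c) c) = y
    rw [inv_op, op_one]
  have hsub : e '' Ioo a b ⊆ comp1 G := by
    rw [← himg]
    apply Set.image_mono
    intro w hw
    exact comp1_convex ha hb (le_of_lt hw.1) (le_of_lt hw.2)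
  apply Filter.mem_of_superset _ hsub
  rw [mem_nhds_iff]
  exact ⟨e '' Ioo a b, subset_rfl, (Homeomorph.isOpen_image e).2 isOpen_Ioo,
    ⟨c, ⟨hc1, hc2⟩, hec⟩⟩

lemma nhds_one_countably_generated (hc : ContinuousGyroOps G)
    (hnd : ∃ a b : G, a ∈ comp1 G ∧ b ∈ comp1 G ∧ a < b) :
    (nhds (one : G)).IsCountablyGenerated := by
  obtain ⟨a, b, ha, hb, hab⟩ := hnd
  -- the decreasing sequence with infimum q
  have step : ∀ w : G, w ∈ comp1 G → a < w → ∃ z, z ∈ comp1 G ∧ a < z ∧ z < w := by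
    intro w hw haw
    obtain ⟨z, h1, h2⟩ := comp1_dense ha hw haw
    exact ⟨z, comp1_convex ha hw (le_of_lt h1) (le_of_lt h2), h1, h2⟩
  have stepup : ∀ w : G, w ∈ comp1 G → w < b → ∃ z, z ∈ comp1 G ∧ w < z ∧ z < b := by
    intro w hw hwb
    obtain ⟨z, h1, h2⟩ := comp1_dense hw hb hwb
    exact ⟨z, comp1_convex hw hb (le_of_lt h1) (le_of_lt h2), h1, h2⟩
  -- right side
  have hrightCG : (nhdsWithin (one : G) (Ioi one)).IsCountablyGenerated := by
    let T := {w : G // w ∈ comp1 G ∧ a < w}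
    let f : T → T := fun p => ⟨(step p.1 p.2.1 p.2.2).choose,
      (step p.1 p.2.1 p.2.2).choose_spec.1, (step p.1 p.2.1 p.2.2).choose_spec.2.1⟩
    have hf : ∀ p : T, (f p).1 < p.1 := fun p => (step p.1 p.2.1 p.2.2).choose_spec.2.2
    let zs : ℕ → T := fun n => f^[n] ⟨b, hb, hab⟩
    let z : ℕ → G := fun n => (zs n).1
    have hzC : ∀ n, z n ∈ comp1 G := fun n => (zs n).2.1
    have haz : ∀ n, a < z n := fun n => (zs n).2.2
    have hzdec : ∀ n, z (n + 1) < z n := by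
      intro n
      have h1 : zs (n + 1) = f (zs n) := Function.iterate_succ_apply' f n _
      show (zs (n+1)).1 < (zs n).1
      rw [h1]
      exact hf (zs n)
    obtain ⟨q, hq⟩ := comp1_exists_glb hzC ha (fun n => le_of_lt (haz n)) (hzdec 0)
    have haq : a ≤ q := hq.2 (by rintro _ ⟨n, rfl⟩; exact le_of_lt (haz n))
    have hqz : ∀ n, q ≤ z n := fun n => hq.1 ⟨n, rfl⟩
    have hqC : q ∈ comp1 G := comp1_convex ha (hzC 0) haq (hqz 0)
    have hqzlt : ∀ n, q < z n := fun n => lt_of_le_of_lt (hqz (n + 1)) (hzdec n)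
    have hinvq : inv q ∈ comp1 G := inv_mem_comp1 hc hqC
    set Tr : G → G := fun w => op (inv q) w with hTr
    have hTrq : Tr q = one := inv_op q
    have hTrmono : ∀ {u v : G}, u < v → Tr u < Tr v := fun {u v} huv =>
      translation_lt hc huv (inv q) hinvq
    have hpos : ∀ n, one < Tr (z n) := fun n => hTrq ▸ hTrmono (hqzlt n)
    have hcoinit : ∀ v, one < v → ∃ n, Tr (z n) < v := by
      intro v hv
      set w : G := op q v with hw
      have hTrw : Tr w = v := inv_op_cancel q v
      have hqw : q < w := by
        rcases lt_trichotomy q w with h | h | h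
        · exact h
        · exfalso; rw [← hTrw, ← h, hTrq] at hv; exact lt_irrefl _ hv
        · exfalso
          have := hTrmono h
          rw [hTrw, hTrq] at this
          exact absurd (lt_trans hv this) (lt_irrefl _)
      have : ¬ w ∈ lowerBounds (Set.range z) := by
        intro hwlb
        exact absurd (lt_of_le_of_lt (hq.2 hwlb) hqw) (lt_irrefl _)
      have : ∃ n, ¬ w ≤ z n := by
        by_contra hall
        push_neg at hall
        exact this (by rintro _ ⟨n, rfl⟩; exact hall n)
      obtain ⟨n, hn⟩ := this
      exact ⟨n, by
        have := hTrmono (lt_of_not_ge hn)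
        rwa [hTrw] at this⟩
    have hbasis : (nhdsWithin (one : G) (Ioi one)).HasBasis (fun _ : ℕ => True)
        (fun n => Ioo (one : G) (Tr (z n))) := by
      refine (nhdsGT_basis_of_exists_gt ⟨Tr (z 0), hpos 0⟩).to_hasBasis ?_ ?_
      · intro v hv
        obtain ⟨n, hn⟩ := hcoinit v hv
        exact ⟨n, trivial, Ioo_subset_Ioo_right (le_of_lt hn)⟩
      · intro n _
        exact ⟨Tr (z n), hpos n, subset_rfl⟩
    exact hbasis.isCountablyGenerated
  -- left side
  have hleftCG : (nhdsWithin (one : G) (Iio one)).IsCountablyGenerated := by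
    let T := {w : G // w ∈ comp1 G ∧ w < b}
    let f : T → T := fun p => ⟨(stepup p.1 p.2.1 p.2.2).choose,
      (stepup p.1 p.2.1 p.2.2).choose_spec.1, (stepup p.1 p.2.1 p.2.2).choose_spec.2.2⟩
    have hf : ∀ p : T, p.1 < (f p).1 := fun p => (stepup p.1 p.2.1 p.2.2).choose_spec.2.1
    let zs : ℕ → T := fun n => f^[n] ⟨a, ha, hab⟩
    let z : ℕ → G := fun n => (zs n).1
    have hzC : ∀ n, z n ∈ comp1 G := fun n => (zs n).2.1
    have hzb : ∀ n, z n < b := fun n => (zs n).2.2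
    have hzinc : ∀ n, z n < z (n + 1) := by
      intro n
      have h1 : zs (n + 1) = f (zs n) := Function.iterate_succ_apply' f n _
      show (zs n).1 < (zs (n+1)).1
      rw [h1]
      exact hf (zs n)
    obtain ⟨p, hp⟩ := comp1_exists_lub hzC hb (fun n => le_of_lt (hzb n)) (hzinc 0)
    have hpb : p ≤ b := hp.2 (by rintro _ ⟨n, rfl⟩; exact le_of_lt (hzb n))
    have hzp : ∀ n, z n ≤ p := fun n => hp.1 ⟨n, rfl⟩
    have hpC : p ∈ comp1 G := comp1_convex (hzC 0) hb (hzp 0) hpb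
    have hzplt : ∀ n, z n < p := fun n => lt_of_lt_of_le (hzinc n) (hzp (n + 1))
    have hinvp : inv p ∈ comp1 G := inv_mem_comp1 hc hpC
    set Tr : G → G := fun w => op (inv p) w with hTr
    have hTrp : Tr p = one := inv_op p
    have hTrmono : ∀ {u v : G}, u < v → Tr u < Tr v := fun {u v} huv =>
      translation_lt hc huv (inv p) hinvp
    have hneg : ∀ n, Tr (z n) < one := fun n => hTrp ▸ hTrmono (hzplt n)
    have hcofin : ∀ v, v < one → ∃ n, v < Tr (z n) := by
      intro v hv
      set w : G := op p v with hw
      have hTrw : Tr w = v := inv_op_cancel p v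
      have hwp : w < p := by
        rcases lt_trichotomy w p with h | h | h
        · exact h
        · exfalso; rw [← hTrw, h, hTrp] at hv; exact lt_irrefl _ hv
        · exfalso
          have := hTrmono h
          rw [hTrw, hTrp] at this
          exact absurd (lt_trans hv this) (lt_irrefl _)
      have : ¬ w ∈ upperBounds (Set.range z) := by
        intro hwub
        exact absurd (lt_of_lt_of_le hwp (hp.2 hwub)) (lt_irrefl _)
      have : ∃ n, ¬ z n ≤ w := by
        by_contra hall
        push_neg at hall
        exact this (by rintro _ ⟨n, rfl⟩; exact hall n)
      obtain ⟨n, hn⟩ := this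
      exact ⟨n, by
        have := hTrmono (lt_of_not_ge hn)
        rwa [hTrw] at this⟩
    have hbasis : (nhdsWithin (one : G) (Iio one)).HasBasis (fun _ : ℕ => True)
        (fun n => Ioo (Tr (z n)) (one : G)) := by
      refine (nhdsLT_basis_of_exists_lt ⟨Tr (z 0), hneg 0⟩).to_hasBasis ?_ ?_
      · intro v hv
        obtain ⟨n, hn⟩ := hcofin v hv
        exact ⟨n, trivial, Ioo_subset_Ioo_left (le_of_lt hn)⟩
      · intro n _
        exact ⟨Tr (z n), hneg n, subset_rfl⟩
    exact hbasis.isCountablyGenerated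
  -- combine
  haveI := hrightCG
  haveI := hleftCG
  rw [← nhdsLE_sup_nhdsGE (one : G), ← Iio_union_right, ← Ioi_union_left,
    nhdsWithin_union, nhdsWithin_union, nhdsWithin_singleton]
  infer_instance

lemma first_countable_of_comp1 (hc : ContinuousGyroOps G)
    (hnd : ∃ a b : G, a ∈ comp1 G ∧ b ∈ comp1 G ∧ a < b) :
    FirstCountableTopology G := by
  haveI := nhds_one_countably_generated hc hnd
  constructor
  intro x
  have h1 : nhds x = Filter.map (homeoL hc x) (nhds (one : G)) := by
    rw [(homeoL hc x).map_nhds_eq]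
    congr 1
    show x = op x one
    exact (op_one x).symm
  rw [h1]
  infer_instance

end Gyrogroup

namespace Gyrogroup

variable {G : Type u} [Gyrogroup G] [TopologicalSpace G]

lemma gyr_mem_of_inv {U : Set G} (hU : ∀ x y : G, (gyr x y) '' U = U) {a b w : G}
    (hw : w ∈ U) : gyr a b w ∈ U := by
  rw [← hU a b]; exact ⟨w, hw, rfl⟩

lemma gyr_symm_mem_of_inv {U : Set G} (hU : ∀ x y : G, (gyr x y) '' U = U) {a b w : G}
    (hw : w ∈ U) : (gyr a b).symm w ∈ U := by
  rw [← hU a b] at hw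
  obtain ⟨u, hu, rfl⟩ := hw
  rwa [Equiv.symm_apply_apply]

lemma metrizable_of_countable_nhds_one [T0Space G]
    (hst : StronglyTopologicalGyrogroup G)
    (hcg : (nhds (one : G)).IsCountablyGenerated) :
    TopologicalSpace.MetrizableSpace G := by
  obtain ⟨hc, 𝒰, h𝒰nhds, h𝒰base, h𝒰inv⟩ := hst
  obtain ⟨Ub, hUb⟩ := (nhds (one : G)).exists_antitone_basis
  -- recursive construction of the invariant base
  have pick : ∀ (n : ℕ) (Wp : Set G), Wp ∈ 𝒰 → ∃ W, W ∈ 𝒰 ∧ W ⊆ Ub n ∧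
      (∀ x y : G, x ∈ W → y ∈ W → op x y ∈ Wp) ∧ (∀ x ∈ W, inv x ∈ Wp) := by
    intro n Wp hWp
    have hWpn : Wp ∈ nhds (one : G) := h𝒰nhds Wp hWp
    have hcont : ContinuousAt (fun p : G × G => op p.1 p.2) (one, one) := hc.1.continuousAt
    have h11 : (fun p : G × G => op p.1 p.2) (one, one) = one := one_op one
    have hpre : (fun p : G × G => op p.1 p.2) ⁻¹' Wp ∈ nhds ((one : G), (one : G)) := by
      apply hcont
      rwa [h11]
    obtain ⟨S, hS, T, hT, hST⟩ := mem_nhds_prod_iff.1 hpre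
    have hinvcont : ContinuousAt (inv : G → G) one := hc.2.continuousAt
    have hipre : (inv : G → G) ⁻¹' Wp ∈ nhds (one : G) := by
      apply hinvcont
      rwa [inv_one]
    have hN : Ub n ∩ (S ∩ T) ∩ (inv : G → G) ⁻¹' Wp ∈ nhds (one : G) :=
      Filter.inter_mem (Filter.inter_mem (hUb.1.mem_of_mem trivial)
        (Filter.inter_mem hS hT)) hipre
    obtain ⟨W, hW𝒰, hWsub⟩ := h𝒰base _ hN
    refine ⟨W, hW𝒰, fun x hx => (hWsub hx).1.1, ?_, fun x hx => (hWsub hx).2⟩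
    intro x y hx hy
    exact hST (Set.mk_mem_prod ((hWsub hx).1.2.1) ((hWsub hy).1.2.2))
  -- build the sequence
  let Q := {V : Set G // V ∈ 𝒰}
  have q0ex : ∃ W, W ∈ 𝒰 ∧ W ⊆ Ub 0 := by
    obtain ⟨W, h1, h2⟩ := h𝒰base (Ub 0) (hUb.1.mem_of_mem trivial)
    exact ⟨W, h1, h2⟩
  let F : ℕ → Q → Q := fun n p => ⟨(pick (n + 1) p.1 p.2).choose,
    (pick (n + 1) p.1 p.2).choose_spec.1⟩
  let Ws : ℕ → Q := fun n => Nat.rec ⟨q0ex.choose, q0ex.choose_spec.1⟩ F n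
  let W : ℕ → Set G := fun n => (Ws n).1
  have hWmem : ∀ n, W n ∈ 𝒰 := fun n => (Ws n).2
  have hWnhds : ∀ n, W n ∈ nhds (one : G) := fun n => h𝒰nhds _ (hWmem n)
  have hWone : ∀ n, (one : G) ∈ W n := fun n => mem_of_mem_nhds (hWnhds n)
  have hWsucc : ∀ n, Ws (n + 1) = F n (Ws n) := fun n => rfl
  have hWUb : ∀ n, W n ⊆ Ub n := by
    intro n
    cases n with
    | zero => exact q0ex.choose_spec.2
    | succ m => exact (pick (m + 1) (W m) (hWmem m)).choose_spec.2.1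
  have hWop : ∀ n, ∀ x y : G, x ∈ W (n + 1) → y ∈ W (n + 1) → op x y ∈ W n :=
    fun n => (pick (n + 1) (W n) (hWmem n)).choose_spec.2.2.1
  have hWinv : ∀ n, ∀ x ∈ W (n + 1), inv x ∈ W n :=
    fun n => (pick (n + 1) (W n) (hWmem n)).choose_spec.2.2.2
  have hWdec : ∀ n, W (n + 1) ⊆ W n := by
    intro n x hx
    have := hWop n x one hx (hWone (n + 1))
    rwa [op_one] at this
  have hWanti : Antitone W := antitone_nat_of_succ_le hWdec
  have hWinvar : ∀ n, ∀ x y : G, (gyr x y) '' W n = W n := fun n => h𝒰inv _ (hWmem n)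
  -- the entourages
  let E : ℕ → Set (G × G) := fun n => {p : G × G | op (inv p.1) p.2 ∈ W n}
  have hEanti : Antitone E := fun m n hmn p hp => hWanti hmn hp
  have hEdir : Directed (· ⊇ ·) E := hEanti.directed_ge
  let 𝓕 : Filter (G × G) := ⨅ n, Filter.principal (E n)
  have h𝓕basis : 𝓕.HasBasis (fun _ : ℕ => True) E := Filter.hasBasis_iInf_principal hEdir
  -- basis of nhds one
  have hWbasis : (nhds (one : G)).HasBasis (fun _ : ℕ => True) W :=
    hUb.1.to_hasBasis' (fun n _ => ⟨n, trivial, hWUb n⟩) (fun n _ => hWnhds n)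
  -- uniform space structure
  have hrefl : Filter.principal SetRel.id ≤ 𝓕 := by
    rw [le_iInf_iff]
    intro n
    rw [Filter.le_principal_iff, Filter.mem_principal]
    rintro ⟨x, y⟩ hxy
    change x = y at hxy
    show op (inv x) y ∈ W n
    rw [hxy, inv_op]
    exact hWone n
  have hsymm : Filter.Tendsto Prod.swap 𝓕 𝓕 := by
    rw [h𝓕basis.tendsto_iff h𝓕basis]
    intro n _
    refine ⟨n + 1, trivial, ?_⟩
    rintro ⟨x, y⟩ hxy
    show op (inv y) x ∈ W n
    rw [symm_identity x y]
    exact gyr_symm_mem_of_inv (hWinvar n) (hWinv n _ hxy)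
  have hcomp : (𝓕.lift' fun s => SetRel.comp s s) ≤ 𝓕 := by
    apply ((h𝓕basis.lift' (monotone_id.relComp monotone_id)).le_basis_iff h𝓕basis).2
    intro n _
    refine ⟨n + 1, trivial, ?_⟩
    rintro ⟨x, z⟩ ⟨y, hxy, hyz⟩
    show op (inv x) z ∈ W n
    rw [comp_identity x y z]
    exact hWop n _ _ hxy (gyr_mem_of_inv (hWinvar (n + 1)) hyz)
  have hnhds : ∀ x : G, nhds x = Filter.comap (Prod.mk x) 𝓕 := by
    intro x
    have h1 : nhds x = Filter.map (homeoL hc x) (nhds (one : G)) := by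
      rw [(homeoL hc x).map_nhds_eq]
      congr 1
      show x = op x one
      exact (op_one x).symm
    have h2 : (Filter.map (homeoL hc x) (nhds (one : G))).HasBasis (fun _ : ℕ => True)
        (fun n => (homeoL hc x) '' W n) := hWbasis.map _
    have h3 : (Filter.comap (Prod.mk x) 𝓕).HasBasis (fun _ : ℕ => True)
        (fun n => Prod.mk x ⁻¹' E n) := h𝓕basis.comap _
    have h4 : ∀ n, Prod.mk x ⁻¹' E n = (homeoL hc x) '' W n := by
      intro n
      ext y
      constructor
      · intro hy
        exact ⟨op (inv x) y, hy, op_inv_cancel x y⟩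
      · rintro ⟨w, hw, rfl⟩
        show op (inv x) (op x w) ∈ W n
        rwa [inv_op_cancel]
    rw [h1]
    apply h2.eq_of_same_basis
    have := h3
    rw [funext h4] at this
    exact this
  letI u : UniformSpace G :=
    { toTopologicalSpace := ‹TopologicalSpace G›
      uniformity := 𝓕
      symm := hsymm
      comp := hcomp
      nhds_eq_comap_uniformity := hnhds }
  haveI : (uniformity G).IsCountablyGenerated := by
    show 𝓕.IsCountablyGenerated
    exact h𝓕basis.isCountablyGenerated
  exact UniformSpace.metrizableSpace

end Gyrogroup

/-- A strongly topologically orderable gyrogroup which is not totally disconnected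
contains an open first-countable L-subgyrogroup, and is metrizable. -/
theorem stmt12 {G : Type u} [Gyrogroup G] [TopologicalSpace G]
    (h : StronglyTopologicallyOrderable G)
    (hntd : ¬ TotallyDisconnectedSpace G) :
    (∃ H : Set G, IsOpen H ∧ IsLSubgyrogroup H ∧
      FirstCountableTopology H) ∧
    TopologicalSpace.MetrizableSpace G := by
  obtain ⟨hst, hord⟩ := h
  obtain ⟨l, hl⟩ := hord
  letI := l
  haveI hot : OrderTopology G := ⟨hl⟩
  have hc : ContinuousGyroOps G := hst.1
  -- the identity component is nondegenerate
  have hnd : ∃ a b : G, a ∈ comp1 G ∧ b ∈ comp1 G ∧ a < b := by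
    rw [totallyDisconnectedSpace_iff_connectedComponent_singleton] at hntd
    push_neg at hntd
    obtain ⟨x, hx⟩ := hntd
    have : ∃ y ∈ connectedComponent x, y ≠ x := by
      by_contra hall
      push_neg at hall
      exact hx (subset_antisymm (fun y hy => hall y hy)
        (by rintro y rfl; exact mem_connectedComponent))
    obtain ⟨y, hy, hyx⟩ := this
    have himg := (homeoL hc (inv x)).continuous.image_connectedComponent_subset x
    have hx1 : (homeoL hc (inv x)) x = one := inv_op x
    rw [hx1] at himg
    have hyC : op (inv x) y ∈ comp1 G := himg ⟨y, hy, rfl⟩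
    have hne : op (inv x) y ≠ one := by
      intro heq
      apply hyx
      apply op_left_cancel (inv x)
      rw [heq, inv_op]
    rcases lt_or_gt_of_ne hne with h' | h'
    · exact ⟨op (inv x) y, one, hyC, one_mem_comp1, h'⟩
    · exact ⟨one, op (inv x) y, one_mem_comp1, hyC, h'⟩
  haveI hFC : FirstCountableTopology G := first_countable_of_comp1 hc hnd
  refine ⟨⟨comp1 G, comp1_open hc hnd, ⟨⟨⟨one, one_mem_comp1⟩, one_mem_comp1,
      fun a ha b hb => op_mem_comp1 hc ha hb, fun a ha => inv_mem_comp1 hc ha,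
      ?_⟩, fun g h' _ => gyr_image_comp1 hc g h'⟩, inferInstance⟩, ?_⟩
  · intro a _ b _
    refine ⟨fun x hx => ?_, (gyr a b).injective.injOn, fun x hx => ?_⟩
    · rw [← gyr_image_comp1 hc a b]
      exact ⟨x, hx, rfl⟩
    · rw [← gyr_image_comp1 hc a b] at hx
      obtain ⟨w, hw, rfl⟩ := hx
      exact ⟨w, hw, rfl⟩
  · haveI : T0Space G := inferInstance
    exact metrizable_of_countable_nhds_one hst (nhds_one_countably_generated hc hnd)
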